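/- For the function H defined by H = G_t − μ G_x + (1/2) G_{xx} with G(t, x) = x² + 2∫_x^∞ z(1 − F^μ(T−t, z)) dz, one has the closed-form expression H(t, x) = (2μ²(T−t) − 2μx + 3)Φ((x − μ(T−t))/√(T−t)) − 2μ√(T−t)φ((x − μ(T−t))/√(T−t)) − e^{2μx}Φ((−x − μ(T−t))/√(T−t)) − 2(1 + μ²(T−t)) for 0 ≤ t < T and x ≥ 0. -/

import Mathlib

open Set MeasureTheory

/-- Standard normal CDF. -/
noncomputable def stdNormalCDF (x : ℝ) : ℝ :=
  ∫ t in Iic x, (Real.sqrt (2 * Real.pi))⁻¹ * Real.exp (-(t ^ 2) / 2)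

/-- The CDF of the maximum of Brownian motion with drift `μ` over `[0, s]`. -/
noncomputable def Fmu (μ s z : ℝ) : ℝ :=
  stdNormalCDF ((z - μ * s) / Real.sqrt s)
    - Real.exp (2 * μ * z) * stdNormalCDF ((-z - μ * s) / Real.sqrt s)

/-- The gain function `G(t, x) = x² + 2∫_x^∞ z (1 - F^μ(T - t, z)) dz`. -/
noncomputable def Gfun (μ T t x : ℝ) : ℝ :=
  x ^ 2 + 2 * ∫ z in Ioi x, z * (1 - Fmu μ (T - t) z)

/-- Standard normal density. -/
noncomputable def stdNormalPDF (x : ℝ) : ℝ :=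
  (Real.sqrt (2 * Real.pi))⁻¹ * Real.exp (-(x ^ 2) / 2)

/-! Write `s = T - t` and `u = (z - μ s)/√s`. Everything rests on the reflection identity
`e^{2μz} φ((-z - μ s)/√s) = φ(u)`, which collapses the derivatives of `F^μ` to
`∂_z F^μ = 2φ(u)/√s - 2μ e^{2μz} Φ((-z - μ s)/√s)` and `∂_s F^μ = -z φ(u)/s^{3/2}`.
The tail bound `1 - Φ(y) ≤ φ(y)` for `y ≥ 1` gives `1 - F^μ ≤ 2φ(u)` for large `z`, so
`z (1 - F^μ)` is integrable, and differentiating under the lower limit gives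
`G_x = 2x F^μ(s, x)`, hence `G_xx = 2F^μ + 2x ∂_z F^μ`. For `G_t` one differentiates under
the integral sign, the integrand being dominated for `s/2 < σ < 2s` by a multiple of
`z² e^{-z²/(8s)}`; the resulting integral `∫_x^∞ z² φ(u) / s^{3/2} dz` has the antiderivative
`(μ² s + 1) Φ(u) - (2μ√s + u) φ(u)`. The closed form is then algebra in `√s`. -/

open Filter Topology Real

lemma stdNormalPDF_eq_fun :
    stdNormalPDF = fun x => (√(2 * π))⁻¹ * exp (-(1 / 2) * x ^ 2) := by
  ext x; rw [stdNormalPDF]; ring_nf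

lemma stdNormalPDF_pos (x : ℝ) : 0 < stdNormalPDF x := by
  rw [stdNormalPDF]; positivity

lemma stdNormalPDF_neg (x : ℝ) : stdNormalPDF (-x) = stdNormalPDF x := by
  simp [stdNormalPDF]

lemma stdNormalPDF_le_exp (x : ℝ) : stdNormalPDF x ≤ exp (-(x ^ 2) / 2) := by
  have h : 1 ≤ √(2 * π) := Real.one_le_sqrt.2 (by linarith [pi_gt_three])
  rw [stdNormalPDF]
  exact mul_le_of_le_one_left (exp_pos _).le (inv_le_one_of_one_le₀ h)

@[fun_prop]
lemma continuous_stdNormalPDF : Continuous stdNormalPDF := by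
  unfold stdNormalPDF; fun_prop

lemma integrable_stdNormalPDF : Integrable stdNormalPDF := by
  rw [stdNormalPDF_eq_fun]
  exact (integrable_exp_neg_mul_sq (by norm_num)).const_mul _

lemma integral_stdNormalPDF : ∫ x, stdNormalPDF x = 1 := by
  rw [stdNormalPDF_eq_fun, integral_const_mul, integral_gaussian, div_div_eq_mul_div, div_one,
    mul_comm π]
  exact inv_mul_cancel₀ (by positivity)

lemma hasDerivAt_stdNormalPDF (x : ℝ) : HasDerivAt stdNormalPDF (-x * stdNormalPDF x) x := by
  rw [stdNormalPDF_eq_fun]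
  have h := ((hasDerivAt_pow 2 x).const_mul (-(1 / 2) : ℝ)).exp.const_mul (√(2 * π))⁻¹
  refine h.congr_deriv ?_
  simp only [Nat.cast_ofNat]
  ring

lemma stdNormalCDF_eq_integral (x : ℝ) : stdNormalCDF x = ∫ t in Iic x, stdNormalPDF t := rfl

lemma stdNormalCDF_add_integral_Ioi (x : ℝ) :
    stdNormalCDF x + ∫ t in Ioi x, stdNormalPDF t = 1 := by
  rw [stdNormalCDF_eq_integral, ← integral_stdNormalPDF]
  exact intervalIntegral.integral_Iic_add_Ioi integrable_stdNormalPDF.integrableOn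
    integrable_stdNormalPDF.integrableOn

lemma stdNormalCDF_neg (x : ℝ) : stdNormalCDF (-x) = 1 - stdNormalCDF x := by
  have h : stdNormalCDF (-x) = ∫ t in Ioi x, stdNormalPDF t := by
    rw [stdNormalCDF_eq_integral, ← neg_neg x, ← integral_comp_neg_Iic, neg_neg]
    simp_rw [stdNormalPDF_neg]
  linarith [stdNormalCDF_add_integral_Ioi x]

lemma hasDerivAt_stdNormalCDF (x : ℝ) : HasDerivAt stdNormalCDF (stdNormalPDF x) x := by
  have h : ∀ y, stdNormalCDF y = stdNormalCDF 0 + ∫ t in (0 : ℝ)..y, stdNormalPDF t := by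
    intro y
    rw [stdNormalCDF_eq_integral, stdNormalCDF_eq_integral,
      ← intervalIntegral.integral_Iic_sub_Iic integrable_stdNormalPDF.integrableOn
        integrable_stdNormalPDF.integrableOn]
    ring
  rw [show stdNormalCDF = _ from funext h]
  exact (continuous_stdNormalPDF.integral_hasStrictDerivAt 0 x).hasDerivAt.const_add _

@[fun_prop]
lemma continuous_stdNormalCDF : Continuous stdNormalCDF :=
  continuous_iff_continuousAt.2 fun x => (hasDerivAt_stdNormalCDF x).continuousAt

lemma tendsto_stdNormalCDF_atTop : Tendsto stdNormalCDF atTop (𝓝 1) := by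
  have h := tendsto_setIntegral_of_monotone (μ := volume) (f := stdNormalPDF)
    (fun y : ℝ => measurableSet_Iic) (fun a b hab => Iic_subset_Iic.2 hab)
    (by rw [iUnion_Iic]; exact integrable_stdNormalPDF.integrableOn)
  rwa [iUnion_Iic, setIntegral_univ, integral_stdNormalPDF] at h

lemma tendsto_stdNormalPDF_atTop : Tendsto stdNormalPDF atTop (𝓝 0) := by
  rw [stdNormalPDF_eq_fun]
  simpa using (tendsto_exp_atBot.comp ((tendsto_pow_atTop two_ne_zero).const_mul_atTop_of_neg
    (by norm_num : -(1 / 2 : ℝ) < 0))).const_mul (√(2 * π))⁻¹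

lemma stdNormalCDF_nonneg (x : ℝ) : 0 ≤ stdNormalCDF x :=
  setIntegral_nonneg measurableSet_Iic fun t _ => (stdNormalPDF_pos t).le

lemma stdNormalCDF_le_one (x : ℝ) : stdNormalCDF x ≤ 1 := by
  linarith [stdNormalCDF_neg x, stdNormalCDF_nonneg (-x)]

lemma tendsto_mul_stdNormalPDF_atTop : Tendsto (fun x => x * stdNormalPDF x) atTop (𝓝 0) := by
  have h := ((tendsto_rpow_abs_mul_exp_neg_mul_sq_cocompact (by norm_num : (0 : ℝ) < 1 / 2)
    1).mono_left atTop_le_cocompact).const_mul (√(2 * π))⁻¹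
  rw [mul_zero] at h
  refine h.congr' ?_
  filter_upwards [eventually_ge_atTop 0] with x hx
  rw [stdNormalPDF_eq_fun, abs_of_nonneg hx, rpow_one]
  ring

lemma integrable_mul_stdNormalPDF : Integrable fun t => t * stdNormalPDF t := by
  rw [stdNormalPDF_eq_fun]
  simpa only [mul_left_comm] using
    (integrable_mul_exp_neg_mul_sq (by norm_num : (0 : ℝ) < 1 / 2)).const_mul (√(2 * π))⁻¹

lemma integral_Ioi_mul_stdNormalPDF (y : ℝ) :
    ∫ t in Ioi y, t * stdNormalPDF t = stdNormalPDF y := by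
  rw [integral_Ioi_of_hasDerivAt_of_tendsto' (f := fun t => -stdNormalPDF t)
    (fun t _ => (hasDerivAt_stdNormalPDF t).neg.congr_deriv (by ring))
    integrable_mul_stdNormalPDF.integrableOn (by simpa using tendsto_stdNormalPDF_atTop.neg)]
  ring

lemma one_sub_stdNormalCDF_le {y : ℝ} (hy : 1 ≤ y) : 1 - stdNormalCDF y ≤ stdNormalPDF y := by
  calc 1 - stdNormalCDF y = ∫ t in Ioi y, stdNormalPDF t := by
        linarith [stdNormalCDF_add_integral_Ioi y]
    _ ≤ ∫ t in Ioi y, t * stdNormalPDF t := by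
        refine setIntegral_mono_on integrable_stdNormalPDF.integrableOn
          integrable_mul_stdNormalPDF.integrableOn measurableSet_Ioi
          fun t ht => le_mul_of_one_le_left (stdNormalPDF_pos t).le (hy.trans ht.out.le)
    _ = stdNormalPDF y := integral_Ioi_mul_stdNormalPDF y

lemma stdNormalPDF_le_gaussian {s : ℝ} (hs : 0 < s) (μ z : ℝ) :
    stdNormalPDF ((z - μ * s) / √s) ≤ exp (μ ^ 2 * s / 2) * exp (-(1 / (4 * s)) * z ^ 2) := by
  refine (stdNormalPDF_le_exp _).trans ?_
  have h : μ ^ 2 * s / 2 + -(1 / (4 * s)) * z ^ 2 - -((z - μ * s) ^ 2 / s) / 2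
      = (z - 2 * μ * s) ^ 2 / (4 * s) := by
    field_simp; ring
  rw [← exp_add, exp_le_exp, div_pow, sq_sqrt hs.le]
  linarith [show 0 ≤ (z - 2 * μ * s) ^ 2 / (4 * s) by positivity]

lemma hasDerivAt_setIntegral_Ioi {g : ℝ → ℝ} (hg : Continuous g) {a x : ℝ}
    (hint : IntegrableOn g (Ioi a)) (hax : a < x) :
    HasDerivAt (fun y => ∫ z in Ioi y, g z) (-g x) x := by
  have h : HasDerivAt (fun y => (∫ z in Ioi a, g z) - ∫ z in a..y, g z) (-g x) x :=
    (hg.integral_hasStrictDerivAt a x).hasDerivAt.const_sub _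
  refine h.congr_of_eventuallyEq ?_
  filter_upwards [Ioi_mem_nhds hax] with y hy
  rw [← intervalIntegral.integral_Ioi_sub_Ioi hint hy.out.le]
  ring

lemma exp_mul_stdNormalPDF {s : ℝ} (hs : 0 < s) (μ z : ℝ) :
    exp (2 * μ * z) * stdNormalPDF ((-z - μ * s) / √s)
      = stdNormalPDF ((z - μ * s) / √s) := by
  rw [stdNormalPDF, stdNormalPDF, mul_left_comm, ← exp_add, div_pow, div_pow, sq_sqrt hs.le]
  congr 2
  field_simp
  ring

@[fun_prop]
lemma continuous_Fmu (μ s : ℝ) : Continuous (Fmu μ s) := by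
  unfold Fmu; fun_prop

lemma one_sub_Fmu_nonneg (μ s z : ℝ) : 0 ≤ 1 - Fmu μ s z := by
  rw [Fmu]
  nlinarith [stdNormalCDF_le_one ((z - μ * s) / √s), stdNormalCDF_nonneg ((-z - μ * s) / √s),
    exp_pos (2 * μ * z)]

lemma one_sub_Fmu_le {s : ℝ} (hs : 0 < s) (μ : ℝ) {z : ℝ} (hz : |μ| * s + √s ≤ z) :
    1 - Fmu μ s z ≤ 2 * stdNormalPDF ((z - μ * s) / √s) := by
  have hsq : 0 < √s := sqrt_pos.2 hs
  have hμ : |μ * s| ≤ |μ| * s := by rw [abs_mul, abs_of_pos hs]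
  have hu : 1 ≤ (z - μ * s) / √s := by
    rw [le_div_iff₀ hsq]; linarith [le_abs_self (μ * s)]
  have hv : 1 ≤ -((-z - μ * s) / √s) := by
    rw [neg_div', le_div_iff₀ hsq]; linarith [neg_abs_le (μ * s)]
  have hΦv : stdNormalCDF ((-z - μ * s) / √s) ≤ stdNormalPDF ((-z - μ * s) / √s) := by
    have h := one_sub_stdNormalCDF_le hv
    rwa [← stdNormalCDF_neg, neg_neg, stdNormalPDF_neg] at h
  have h := mul_le_mul_of_nonneg_left hΦv (exp_pos (2 * μ * z)).le
  rw [exp_mul_stdNormalPDF hs] at h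
  rw [Fmu]
  linarith [one_sub_stdNormalCDF_le hu]

lemma integrableOn_mul_one_sub_Fmu {s : ℝ} (hs : 0 < s) (μ b : ℝ) :
    IntegrableOn (fun z => z * (1 - Fmu μ s z)) (Ioi b) := by
  set B := max b (|μ| * s + √s)
  have hB : 0 ≤ B := le_max_of_le_right (by positivity)
  rw [← Ioc_union_Ioi_eq_Ioi (le_max_left b _)]
  refine (Continuous.integrableOn_Ioc (by fun_prop)).union ?_
  refine Integrable.mono' (((integrable_mul_exp_neg_mul_sq (b := 1 / (4 * s))
    (by positivity)).const_mul (2 * exp (μ ^ 2 * s / 2))).integrableOn)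
    (Continuous.aestronglyMeasurable (by fun_prop)) ?_
  filter_upwards [ae_restrict_mem measurableSet_Ioi] with z hz
  have hz0 : 0 ≤ z := hB.trans hz.out.le
  rw [norm_of_nonneg (mul_nonneg hz0 (one_sub_Fmu_nonneg μ s z))]
  calc z * (1 - Fmu μ s z) ≤ z * (2 * stdNormalPDF ((z - μ * s) / √s)) :=
        mul_le_mul_of_nonneg_left (one_sub_Fmu_le hs μ ((le_max_right _ _).trans hz.out.le)) hz0
    _ ≤ z * (2 * (exp (μ ^ 2 * s / 2) * exp (-(1 / (4 * s)) * z ^ 2))) := by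
        gcongr; exact stdNormalPDF_le_gaussian hs μ z
    _ = _ := by ring

lemma hasDerivAt_Fmu_space {s : ℝ} (hs : 0 < s) (μ z : ℝ) :
    HasDerivAt (Fmu μ s) (2 * stdNormalPDF ((z - μ * s) / √s) / √s
      - 2 * μ * exp (2 * μ * z) * stdNormalCDF ((-z - μ * s) / √s)) z := by
  have hu : HasDerivAt (fun z => (z - μ * s) / √s) (1 / √s) z :=
    ((hasDerivAt_id z).sub_const _).div_const _
  have hv : HasDerivAt (fun z => (-z - μ * s) / √s) (-1 / √s) z :=
    ((hasDerivAt_id z).neg.sub_const _).div_const _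
  have he : HasDerivAt (fun z => exp (2 * μ * z)) (exp (2 * μ * z) * (2 * μ)) z := by
    simpa using ((hasDerivAt_id z).const_mul (2 * μ)).exp
  refine (((hasDerivAt_stdNormalCDF _).comp z hu).sub
    (he.mul ((hasDerivAt_stdNormalCDF _).comp z hv))).congr_deriv ?_
  rw [← exp_mul_stdNormalPDF hs μ z]
  simp only [Function.comp_apply]
  ring

lemma hasDerivAt_Fmu_time {s : ℝ} (hs : 0 < s) (μ z : ℝ) :
    HasDerivAt (fun s => Fmu μ s z)
      (-(z * stdNormalPDF ((z - μ * s) / √s)) / (s * √s)) s := by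
  have hsq : √s ≠ 0 := (sqrt_pos.2 hs).ne'
  have hr := hasDerivAt_sqrt hs.ne'
  have hu := (((hasDerivAt_id s).const_mul μ).const_sub z).div hr hsq
  have hv := (((hasDerivAt_id s).const_mul μ).const_sub (-z)).div hr hsq
  refine (((hasDerivAt_stdNormalCDF _).comp s hu).sub
    (((hasDerivAt_stdNormalCDF _).comp s hv).const_mul (exp (2 * μ * z)))).congr_deriv ?_
  simp only [Pi.div_apply, id]
  rw [← exp_mul_stdNormalPDF hs μ z]
  field_simp
  rw [sq_sqrt hs.le]
  ring

lemma integral_Ioi_sq_mul_stdNormalPDF {s : ℝ} (hs : 0 < s) (μ x : ℝ) :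
    ∫ z in Ioi x, z ^ 2 * stdNormalPDF ((z - μ * s) / √s) / (s * √s)
      = (μ ^ 2 * s + 1) * (1 - stdNormalCDF ((x - μ * s) / √s))
        + (2 * μ * √s + (x - μ * s) / √s) * stdNormalPDF ((x - μ * s) / √s) := by
  have hsq : 0 < √s := sqrt_pos.2 hs
  have hu_lim : Tendsto (fun z => (z - μ * s) / √s) atTop atTop :=
    (tendsto_atTop_add_const_right _ (-(μ * s)) tendsto_id).atTop_div_const hsq
  have hderiv : ∀ z ∈ Ici x, HasDerivAt
      (fun z => (μ ^ 2 * s + 1) * stdNormalCDF ((z - μ * s) / √s)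
        - (2 * μ * √s + (z - μ * s) / √s) * stdNormalPDF ((z - μ * s) / √s))
      (z ^ 2 * stdNormalPDF ((z - μ * s) / √s) / (s * √s)) z := by
    intro z _
    have hu : HasDerivAt (fun z => (z - μ * s) / √s) (1 / √s) z :=
      ((hasDerivAt_id z).sub_const _).div_const _
    refine ((((hasDerivAt_stdNormalCDF _).comp z hu).const_mul _).sub
      ((hu.const_add _).mul ((hasDerivAt_stdNormalPDF _).comp z hu))).congr_deriv ?_
    simp only [Function.comp_apply]
    field_simp
    rw [sq_sqrt hs.le]
    ring
  have hlim : Tendsto (fun z => (μ ^ 2 * s + 1) * stdNormalCDF ((z - μ * s) / √s)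
      - (2 * μ * √s + (z - μ * s) / √s) * stdNormalPDF ((z - μ * s) / √s)) atTop
      (𝓝 ((μ ^ 2 * s + 1) * 1 - (2 * μ * √s * 0 + 0))) := by
    refine ((tendsto_stdNormalCDF_atTop.comp hu_lim).const_mul _).sub ?_
    simp_rw [add_mul]
    exact ((tendsto_stdNormalPDF_atTop.comp hu_lim).const_mul _).add
      (tendsto_mul_stdNormalPDF_atTop.comp hu_lim)
  rw [integral_Ioi_of_hasDerivAt_of_nonneg' hderiv (fun z _ => by
    have := stdNormalPDF_pos ((z - μ * s) / √s); positivity) hlim]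
  ring

lemma hasDerivAt_integral_mul_one_sub_Fmu_time {s : ℝ} (hs : 0 < s) (μ x : ℝ) :
    HasDerivAt (fun s => ∫ z in Ioi x, z * (1 - Fmu μ s z))
      (∫ z in Ioi x, z ^ 2 * stdNormalPDF ((z - μ * s) / √s) / (s * √s)) s := by
  set c := exp (μ ^ 2 * (2 * s) / 2) / (s / 2 * √(s / 2))
  have hbound : ∀ z, ∀ σ ∈ Ioo (s / 2) (2 * s),
      ‖z ^ 2 * stdNormalPDF ((z - μ * σ) / √σ) / (σ * √σ)‖
        ≤ c * (z ^ 2 * exp (-(1 / (4 * (2 * s))) * z ^ 2)) := by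
    rintro z σ ⟨hσ₁, hσ₂⟩
    have hσ : 0 < σ := by linarith
    rw [norm_of_nonneg (by have := stdNormalPDF_pos ((z - μ * σ) / √σ); positivity)]
    calc z ^ 2 * stdNormalPDF ((z - μ * σ) / √σ) / (σ * √σ)
        ≤ z ^ 2 * (exp (μ ^ 2 * σ / 2) * exp (-(1 / (4 * σ)) * z ^ 2)) / (σ * √σ) := by
          gcongr; exact stdNormalPDF_le_gaussian hσ μ z
      _ ≤ z ^ 2 * (exp (μ ^ 2 * (2 * s) / 2) * exp (-(1 / (4 * (2 * s))) * z ^ 2))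
            / (s / 2 * √(s / 2)) := by
          gcongr
      _ = c * (z ^ 2 * exp (-(1 / (4 * (2 * s))) * z ^ 2)) := by ring
  have hint : Integrable fun z => c * (z ^ 2 * exp (-(1 / (4 * (2 * s))) * z ^ 2)) := by
    have h := integrable_rpow_mul_exp_neg_mul_sq (b := 1 / (4 * (2 * s))) (by positivity)
      (s := 2) (by norm_num)
    simp only [rpow_two] at h
    exact h.const_mul c
  have hdiff : ∀ z, ∀ σ ∈ Ioo (s / 2) (2 * s), HasDerivAt (fun σ => z * (1 - Fmu μ σ z))
      (z ^ 2 * stdNormalPDF ((z - μ * σ) / √σ) / (σ * √σ)) σ := by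
    rintro z σ ⟨hσ₁, -⟩
    exact (((hasDerivAt_Fmu_time (by linarith) μ z).const_sub 1).const_mul z).congr_deriv
      (by ring)
  exact (hasDerivAt_integral_of_dominated_loc_of_deriv_le (μ := volume.restrict (Ioi x))
    (F := fun σ z => z * (1 - Fmu μ σ z)) (Ioo_mem_nhds (by linarith) (by linarith))
    (.of_forall fun σ => (Continuous.aestronglyMeasurable (by fun_prop)))
    (integrableOn_mul_one_sub_Fmu hs μ x) (Continuous.aestronglyMeasurable (by fun_prop))
    (.of_forall (hbound ·)) hint.integrableOn (.of_forall (hdiff ·))).2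

lemma hasDerivAt_Gfun_time (μ : ℝ) {T t : ℝ} (hs : 0 < T - t) (x : ℝ) :
    HasDerivAt (fun t => Gfun μ T t x)
      (-2 * ((μ ^ 2 * (T - t) + 1) * (1 - stdNormalCDF ((x - μ * (T - t)) / √(T - t)))
        + (2 * μ * √(T - t) + (x - μ * (T - t)) / √(T - t))
          * stdNormalPDF ((x - μ * (T - t)) / √(T - t)))) t := by
  rw [← integral_Ioi_sq_mul_stdNormalPDF hs]
  exact (((hasDerivAt_integral_mul_one_sub_Fmu_time hs μ x).comp_const_sub T t).const_mul 2
    |>.const_add (x ^ 2)).congr_deriv (by ring)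

lemma hasDerivAt_Gfun_space (μ : ℝ) {T t : ℝ} (hs : 0 < T - t) (y : ℝ) :
    HasDerivAt (fun y => Gfun μ T t y) (2 * y * Fmu μ (T - t) y) y := by
  have hI := hasDerivAt_setIntegral_Ioi (by fun_prop)
    (integrableOn_mul_one_sub_Fmu hs μ (y - 1)) (sub_one_lt y)
  exact ((hasDerivAt_pow 2 y).add (hI.const_mul 2)).congr_deriv (by ring)

theorem Hfun_closed_form_general (μ T : ℝ) (t x : ℝ) (ht : t ∈ Ico 0 T) :
    deriv (fun t' => Gfun μ T t' x) t - μ * deriv (fun y => Gfun μ T t y) x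
        + (1/2) * deriv (deriv (fun y => Gfun μ T t y)) x
      = (2 * μ ^ 2 * (T - t) - 2 * μ * x + 3) *
            stdNormalCDF ((x - μ * (T - t)) / Real.sqrt (T - t))
        - 2 * μ * Real.sqrt (T - t) * stdNormalPDF ((x - μ * (T - t)) / Real.sqrt (T - t))
        - Real.exp (2 * μ * x) * stdNormalCDF ((-x - μ * (T - t)) / Real.sqrt (T - t))
        - 2 * (1 + μ ^ 2 * (T - t)) := by
  have hs : 0 < T - t := sub_pos.2 ht.2
  have hGx : deriv (fun y => Gfun μ T t y) = fun y => 2 * y * Fmu μ (T - t) y :=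
    funext fun y => (hasDerivAt_Gfun_space μ hs y).deriv
  have hGxx : HasDerivAt (fun y => 2 * y * Fmu μ (T - t) y) _ x :=
    ((hasDerivAt_id' x).const_mul 2).mul (hasDerivAt_Fmu_space hs μ x)
  rw [(hasDerivAt_Gfun_time μ hs x).deriv, hGx, hGxx.deriv]
  simp only [Fmu]
  generalize T - t = s at hs ⊢
  obtain ⟨r, hr, rfl⟩ : ∃ r, 0 < r ∧ r ^ 2 = s := ⟨√s, sqrt_pos.2 hs, sq_sqrt hs.le⟩
  rw [sqrt_sq hr.le]
  field_simp
  ring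

/-- `H = G_t - μ G_x + (1/2) G_{xx}` is given by the closed-form
expression (4.2). -/
theorem Hfun_closed_form (μ T : ℝ) (hT : 0 < T) (t x : ℝ) (ht : t ∈ Ico 0 T) (hx : 0 ≤ x) :
    deriv (fun t' => Gfun μ T t' x) t - μ * deriv (fun y => Gfun μ T t y) x
        + (1/2) * deriv (deriv (fun y => Gfun μ T t y)) x
      = (2 * μ ^ 2 * (T - t) - 2 * μ * x + 3) *
            stdNormalCDF ((x - μ * (T - t)) / Real.sqrt (T - t))
        - 2 * μ * Real.sqrt (T - t) * stdNormalPDF ((x - μ * (T - t)) / Real.sqrt (T - t))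
        - Real.exp (2 * μ * x) * stdNormalCDF ((-x - μ * (T - t)) / Real.sqrt (T - t))
        - 2 * (1 + μ ^ 2 * (T - t)) :=
  Hfun_closed_form_general μ T t x ht
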